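/- (Proposition 3) Suppose all partial derivatives D^{(α,β)}κ = ∂^{α+β}κ/∂s^α∂t^β with 0 ≤ α+β ≤ 2r+3 exist, are continuous on [0,1]×[0,1], and satisfy |D^{(α,β)}κ(s,t)| ≤ C₂. Then there exists a constant C > 0, independent of n, such that for every (2r+2)-times continuously differentiable x : [0,1] → ℝ, ‖K(y − Q_n y)‖_∞ ≤ C ‖x‖_{2r+2,∞} h^{4r+4}, where y := K(x − Q_n x). -/

import Mathlib

open Set MeasureTheory

/-- Equidistant interpolation nodes: `τ_j^i = t_{j-1} + i·h/(2r)` with `h = 1/n`. -/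
noncomputable def tau (n r j i : ℕ) : ℝ :=
  ((j : ℝ) - 1) / n + (i : ℝ) / (2 * r * n)

/-- The unique polynomial of degree ≤ 2r interpolating `x` at the nodes of `Δ_j`. -/
noncomputable def interpPoly (n r j : ℕ) (x : ℝ → ℝ) : Polynomial ℝ :=
  Lagrange.interpolate (Finset.range (2 * r + 1)) (tau n r j) (fun i => x (tau n r j i))

/-- The interpolatory projection `Q_n x`: on each subinterval `Δ_j = [(j-1)/n, j/n]` it
coincides with the polynomial of degree ≤ 2r interpolating `x` at the nodes `τ_j^i`.
(At a partition point both adjacent pieces take the value `x(t_j)`.) -/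
noncomputable def Qn (n r : ℕ) (x : ℝ → ℝ) (t : ℝ) : ℝ :=
  (interpPoly n r (min n (⌊t * (n : ℝ)⌋₊ + 1)) x).eval t

/-- The Fredholm integral operator with kernel `κ`. -/
noncomputable def Kop (κ : ℝ → ℝ → ℝ) (x : ℝ → ℝ) (s : ℝ) : ℝ :=
  ∫ t in (0:ℝ)..1, κ s t * x t

/-- Supremum norm on `[0,1]`. -/
noncomputable def supNorm (f : ℝ → ℝ) : ℝ :=
  ⨆ t : Set.Icc (0:ℝ) 1, |f t.1|

/-- The nodal polynomial `Φ_j(t) = ∏_{i=0}^{2r} (t − τ_j^i)`. -/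
noncomputable def Phi (n r j : ℕ) (t : ℝ) : ℝ :=
  ∏ i ∈ Finset.range (2 * r + 1), (t - tau n r j i)

/-- `‖x‖_{k,∞} = max_{0 ≤ i ≤ k} ‖x^{(i)}‖_∞` (derivatives taken within `[0,1]`). -/
noncomputable def cknorm (k : ℕ) (x : ℝ → ℝ) : ℝ :=
  ⨆ i : Fin (k + 1), supNorm (iteratedDerivWithin i x (Set.Icc 0 1))

/-!
On a piece `[a, a + h]`, write `g = T + ρ` with `T` the Taylor polynomial of degree `2r + 1` at
`a`. The interpolant of `T` at the `2r + 1` nodes is `T - c Φ`, with `Φ` the nodal polynomial and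
`c = g⁽²ʳ⁺¹⁾(a) / (2r + 1)!` the top coefficient of `T`, so `g - Qₙ g = (ρ - Qₙ ρ) + c Φ` with
`ρ - Qₙ ρ = O(h^(2r+2))`. The nodes are symmetric about the midpoint and odd in number, so `Φ` is
odd about the midpoint and has mean zero; against a Lipschitz weight `φ` this gives
`∫ φ Φ = ∫ (φ - φ a) Φ = O(h^(2r+3))`. Summing over the `n` pieces,
`∫ φ (g - Qₙ g) = O(h^(2r+2))`, with a constant involving only bounds on `φ`, its Lipschitz
constant and `g⁽²ʳ⁺¹⁾, g⁽²ʳ⁺²⁾`.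

With `φ = ∂ₛᵏ κ(s, ·)` this bounds `y = K(x - Qₙ x)` and, differentiating under the integral,
its first `2r + 2` derivatives by `O(h^(2r+2)) ‖x‖_{2r+2,∞}`. Applying the estimate once more,
to `y` with `φ = κ(s, ·)`, gives `h^(4r+4)`.
-/

open Polynomial Lagrange
open scoped NNReal

namespace Lagrange

section Field

variable {ι F : Type*} [DecidableEq ι] [Field F] {s : Finset ι} {v : ι → F}

theorem interpolate_eq_sub_coeff_mul_nodal (hvs : Set.InjOn v s) {p : F[X]}
    (hp : p.natDegree ≤ s.card) :
    interpolate s v (fun i => p.eval (v i)) = p - C (p.coeff s.card) * nodal s v := by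
  symm
  refine eq_interpolate_of_eval_eq _ hvs ?_ fun i hi => by simp [eval_nodal_at_node hi]
  rw [degree_lt_iff_coeff_zero]
  intro m hm
  have hm : s.card ≤ m := by exact_mod_cast hm
  rw [coeff_sub, coeff_C_mul]
  rcases hm.eq_or_lt with rfl | hlt
  · have : (nodal s v).coeff s.card = 1 := by
      simpa [natDegree_nodal] using (nodal_monic (s := s) (v := v)).coeff_natDegree
    simp [this]
  · rw [coeff_eq_zero_of_natDegree_lt (hp.trans_lt hlt),
      coeff_eq_zero_of_natDegree_lt (p := nodal s v) (by rwa [natDegree_nodal]), mul_zero,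
      sub_zero]

theorem sub_eval_interpolate_eq (hvs : Set.InjOn v s) {p : F[X]} (hp : p.natDegree ≤ s.card)
    (g : F → F) (t : F) :
    g t - (interpolate s v (fun i => g (v i))).eval t =
      (g t - p.eval t) - (interpolate s v (fun i => g (v i) - p.eval (v i))).eval t
        + p.coeff s.card * (nodal s v).eval t := by
  have hsplit : (fun i => g (v i)) =
      (fun i => g (v i) - p.eval (v i)) + fun i => p.eval (v i) := by
    ext i; simp
  rw [hsplit, map_add, interpolate_eq_sub_coeff_mul_nodal hvs hp]
  simp only [eval_add, eval_sub, eval_mul, eval_C]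
  ring

end Field

theorem eval_nodal_range_reflect {R : Type*} [CommRing R] {w : ℕ → R} {m : ℕ} {c : R}
    (hw : ∀ i ≤ m, w i + w (m - i) = c) (t : R) :
    (nodal (Finset.range (m + 1)) w).eval (c - t) =
      (-1) ^ (m + 1) * (nodal (Finset.range (m + 1)) w).eval t := by
  have hterm : ∀ i ∈ Finset.range (m + 1), c - t - w i = -1 * (t - w (m - i)) := fun i hi => by
    rw [← hw i (Nat.lt_succ_iff.mp (Finset.mem_range.mp hi))]; ring
  rw [eval_nodal, eval_nodal, Finset.prod_congr rfl hterm, Finset.prod_mul_distrib,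
    Finset.prod_const, Finset.card_range, ← Finset.prod_range_reflect (fun i => t - w i) (m + 1),
    Nat.add_sub_cancel]

variable {ι : Type*} {s : Finset ι} {v : ι → ℝ} {a b t : ℝ}

theorem integral_eval_nodal_eq_zero {w : ℕ → ℝ} {m : ℕ} (hm : Even m)
    (hw : ∀ i ≤ m, w i + w (m - i) = a + b) :
    ∫ t in a..b, (nodal (Finset.range (m + 1)) w).eval t = 0 := by
  have hsymm := intervalIntegral.integral_comp_sub_left
    (fun t => (nodal (Finset.range (m + 1)) w).eval t) (a + b) (a := a) (b := b)
  simp only [eval_nodal_range_reflect hw, hm.add_one.neg_one_pow, neg_one_mul,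
    intervalIntegral.integral_neg, add_sub_cancel_right, add_sub_cancel_left] at hsymm
  linarith

theorem abs_eval_nodal_le (hv : ∀ i ∈ s, v i ∈ Icc a b) (ht : t ∈ Icc a b) :
    |(nodal s v).eval t| ≤ (b - a) ^ s.card := by
  rw [eval_nodal, Finset.abs_prod, ← Finset.prod_const]
  exact Finset.prod_le_prod (fun _ _ => abs_nonneg _) fun i hi =>
    abs_sub_le_of_le_of_le ht.1 ht.2 (hv i hi).1 (hv i hi).2

theorem abs_eval_basis_le [DecidableEq ι] {δ : ℝ} (hδ : 0 < δ) (hv : ∀ i ∈ s, v i ∈ Icc a b)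
    (hsep : ∀ i ∈ s, ∀ k ∈ s, i ≠ k → δ ≤ |v i - v k|) {i : ι} (hi : i ∈ s)
    (ht : t ∈ Icc a b) :
    |(Lagrange.basis s v i).eval t| ≤ ((b - a) / δ) ^ (s.card - 1) := by
  rw [Lagrange.basis, eval_prod, Finset.abs_prod, ← Finset.card_erase_of_mem hi,
    ← Finset.prod_const]
  refine Finset.prod_le_prod (fun _ _ => abs_nonneg _) fun k hk => ?_
  obtain ⟨hki, hk⟩ := Finset.mem_erase.mp hk
  rw [basisDivisor, eval_mul, eval_C, eval_sub, eval_X, eval_C, abs_mul, abs_inv,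
    inv_mul_eq_div]
  exact div_le_div₀ (by linarith [ht.1, ht.2])
    (abs_sub_le_of_le_of_le ht.1 ht.2 (hv k hk).1 (hv k hk).2) hδ (hsep i hi k hk (Ne.symm hki))

theorem abs_eval_interpolate_le [DecidableEq ι] {δ R : ℝ} (hδ : 0 < δ)
    (hv : ∀ i ∈ s, v i ∈ Icc a b) (hsep : ∀ i ∈ s, ∀ k ∈ s, i ≠ k → δ ≤ |v i - v k|)
    {y : ι → ℝ} (hy : ∀ i ∈ s, |y i| ≤ R) (ht : t ∈ Icc a b) :
    |(interpolate s v y).eval t| ≤ s.card * ((b - a) / δ) ^ (s.card - 1) * R := by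
  rw [interpolate_apply, eval_finsetSum]
  calc |∑ i ∈ s, (C (y i) * Lagrange.basis s v i).eval t|
      ≤ ∑ i ∈ s, |(C (y i) * Lagrange.basis s v i).eval t| := Finset.abs_sum_le_sum_abs _ _
    _ ≤ ∑ _i ∈ s, R * ((b - a) / δ) ^ (s.card - 1) := by
        refine Finset.sum_le_sum fun i hi => ?_
        rw [eval_mul, eval_C, abs_mul]
        exact mul_le_mul (hy i hi) (abs_eval_basis_le hδ hv hsep hi ht) (abs_nonneg _)
          ((abs_nonneg _).trans (hy i hi))
    _ = s.card * ((b - a) / δ) ^ (s.card - 1) * R := by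
        rw [Finset.sum_const, nsmul_eq_mul]; ring

end Lagrange

noncomputable def equiNode (a h : ℝ) (m i : ℕ) : ℝ := a + i * h / m

section equiNode

variable {a h : ℝ} {m i k : ℕ}

theorem equiNode_sub (a h : ℝ) (m i k : ℕ) :
    equiNode a h m i - equiNode a h m k = ((i : ℝ) - k) * (h / m) := by
  simp only [equiNode]; ring

theorem equiNode_mem (hh : 0 ≤ h) (hi : i < m + 1) : equiNode a h m i ∈ Icc a (a + h) := by
  have hfrac : (i : ℝ) * h / m ≤ h := by
    rcases Nat.eq_zero_or_pos m with rfl | hm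
    · simpa using hh
    rw [div_le_iff₀ (by exact_mod_cast hm)]
    nlinarith [(Nat.cast_le (α := ℝ)).mpr (Nat.lt_succ_iff.mp hi)]
  have : 0 ≤ (i : ℝ) * h / m := by positivity
  exact ⟨by simp only [equiNode]; linarith, by simp only [equiNode]; linarith⟩

theorem le_abs_equiNode_sub (hh : 0 ≤ h) (hik : i ≠ k) :
    h / m ≤ |equiNode a h m i - equiNode a h m k| := by
  have hone : (1 : ℝ) ≤ |(i : ℝ) - k| := by
    have : ((i : ℤ) - k) ≠ 0 := sub_ne_zero.mpr (by exact_mod_cast hik)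
    exact_mod_cast Int.one_le_abs this
  rw [equiNode_sub, abs_mul, abs_of_nonneg (by positivity : 0 ≤ h / m)]
  exact le_mul_of_one_le_left (by positivity) hone

theorem equiNode_injOn (hh : 0 < h) (hm : 0 < m) :
    Set.InjOn (equiNode a h m) (Finset.range (m + 1)) := by
  intro i _ k _ hik
  by_contra hne
  have := le_abs_equiNode_sub (a := a) (m := m) hh.le hne
  rw [hik, sub_self, abs_zero] at this
  exact (div_pos hh (by exact_mod_cast hm)).not_ge this

theorem equiNode_add_equiNode_sub (hm : 0 < m) (hi : i ≤ m) :
    equiNode a h m i + equiNode a h m (m - i) = a + (a + h) := by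
  simp only [equiNode, Nat.cast_sub hi]
  field_simp
  ring

end equiNode

noncomputable def taylorPolynomial (g : ℝ → ℝ) (N : ℕ) (s : Set ℝ) (a : ℝ) : ℝ[X] :=
  ∑ k ∈ Finset.range (N + 1), C (iteratedDerivWithin k g s a / k.factorial) * (X - C a) ^ k

section taylorPolynomial

variable {g : ℝ → ℝ} {N : ℕ} {s : Set ℝ} {a : ℝ}

theorem eval_taylorPolynomial (t : ℝ) :
    (taylorPolynomial g N s a).eval t = taylorWithinEval g N s a t := by
  simp only [taylorPolynomial, taylor_within_apply, eval_finsetSum, eval_mul, eval_C, eval_pow,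
    eval_sub, eval_X, smul_eq_mul]
  exact Finset.sum_congr rfl fun k _ => by ring

theorem natDegree_taylorPolynomial_le : (taylorPolynomial g N s a).natDegree ≤ N :=
  natDegree_sum_le_of_forall_le _ _ fun k hk => (natDegree_C_mul_le _ _).trans <| by
    rw [natDegree_pow, natDegree_X_sub_C, mul_one]
    exact Nat.lt_succ_iff.mp (Finset.mem_range.mp hk)

theorem coeff_taylorPolynomial_self :
    (taylorPolynomial g N s a).coeff N = iteratedDerivWithin N g s a / N.factorial := by
  rw [taylorPolynomial, finsetSum_coeff, Finset.sum_eq_single N]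
  · have hlead := ((monic_X_sub_C a).pow N).coeff_natDegree
    rw [natDegree_pow, natDegree_X_sub_C, mul_one] at hlead
    rw [coeff_C_mul, hlead, mul_one]
  · intro k hk hkN
    rw [coeff_C_mul, coeff_eq_zero_of_natDegree_lt, mul_zero]
    rw [natDegree_pow, natDegree_X_sub_C, mul_one]
    exact lt_of_le_of_ne (Nat.lt_succ_iff.mp (Finset.mem_range.mp hk)) hkN
  · exact fun h => absurd (Finset.self_mem_range_succ N) h

theorem abs_sub_eval_taylorPolynomial_le {h M t : ℝ} (hh : 0 ≤ h)
    (hg : ContDiffOn ℝ (N + 1) g (Icc a (a + h)))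
    (hM : ∀ u ∈ Icc a (a + h), |iteratedDerivWithin (N + 1) g (Icc a (a + h)) u| ≤ M)
    (ht : t ∈ Icc a (a + h)) :
    |g t - (taylorPolynomial g N (Icc a (a + h)) a).eval t| ≤ M * h ^ (N + 1) / N.factorial := by
  have hM0 : 0 ≤ M := (abs_nonneg _).trans (hM a (left_mem_Icc.mpr (by linarith)))
  rw [eval_taylorPolynomial]
  refine (taylor_mean_remainder_bound (by linarith) hg ht hM).trans ?_
  gcongr
  · linarith [ht.1]
  · linarith [ht.2]

end taylorPolynomial

section integralBounds

variable {a b B : ℝ}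

theorem abs_integral_le_mul_of_forall_abs_le {f : ℝ → ℝ} (hab : a ≤ b)
    (hB : ∀ t ∈ Icc a b, |f t| ≤ B) : |∫ t in a..b, f t| ≤ B * (b - a) := by
  rw [← Real.norm_eq_abs, ← abs_of_nonneg (sub_nonneg.mpr hab)]
  exact intervalIntegral.norm_integral_le_of_norm_le_const fun t ht =>
    hB t (Ioc_subset_Icc_self (uIoc_of_le hab ▸ ht))

theorem abs_integral_mul_le_mul_integral_abs {f e : ℝ → ℝ} (hab : a ≤ b)
    (he : IntervalIntegrable e volume a b) (hB : ∀ t ∈ Icc a b, |f t| ≤ B) :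
    |∫ t in a..b, f t * e t| ≤ B * ∫ t in a..b, |e t| := by
  rw [← Real.norm_eq_abs, ← intervalIntegral.integral_const_mul]
  refine intervalIntegral.norm_integral_le_of_norm_le hab
    (Filter.Eventually.of_forall fun t ht => ?_) (he.abs.const_mul _)
  rw [Real.norm_eq_abs, abs_mul]
  exact mul_le_mul_of_nonneg_right (hB t (Ioc_subset_Icc_self ht)) (abs_nonneg _)

theorem abs_integral_mul_le_of_integral_eq_zero {φ f : ℝ → ℝ} {L : ℝ≥0}
    (hab : a ≤ b) (hφ : LipschitzOnWith L φ (Icc a b)) (hf : ContinuousOn f (Icc a b))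
    (hf0 : ∫ t in a..b, f t = 0) (hB : ∀ t ∈ Icc a b, |f t| ≤ B) :
    |∫ t in a..b, φ t * f t| ≤ L * (b - a) * B * (b - a) := by
  have hfi : IntervalIntegrable f volume a b := hf.intervalIntegrable_of_Icc hab
  have hφi : IntervalIntegrable (fun t => φ t * f t) volume a b :=
    (hφ.continuousOn.mul hf).intervalIntegrable_of_Icc hab
  have hcenter : ∫ t in a..b, φ t * f t = ∫ t in a..b, (φ t - φ a) * f t := by
    simp only [sub_mul, intervalIntegral.integral_sub hφi (hfi.const_mul _),
      intervalIntegral.integral_const_mul, hf0, mul_zero, sub_zero]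
  rw [hcenter]
  refine abs_integral_le_mul_of_forall_abs_le hab fun t ht => ?_
  have hdist : |φ t - φ a| ≤ L * (b - a) := by
    have := hφ.dist_le_mul t ht a (left_mem_Icc.mpr hab)
    rw [Real.dist_eq, Real.dist_eq, abs_of_nonneg (sub_nonneg.mpr ht.1)] at this
    exact this.trans (by gcongr; exact ht.2)
  rw [abs_mul]
  exact mul_le_mul hdist (hB t ht) (abs_nonneg _) (by positivity)

end integralBounds

noncomputable def equiInterp (a h : ℝ) (m : ℕ) (g : ℝ → ℝ) : ℝ[X] :=
  interpolate (Finset.range (m + 1)) (equiNode a h m) fun i => g (equiNode a h m i)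

-- `1` for the Taylor remainder, `(m + 1) * m ^ m` for its interpolant (a bound on the Lebesgue
-- constant of the `m + 1` equidistant nodes) and `1` for the nodal term.
noncomputable def interpConst (m : ℕ) : ℝ :=
  (2 + (m + 1) * (m : ℝ) ^ m) / (m + 1).factorial

theorem interpConst_pos (m : ℕ) : 0 < interpConst m := by
  unfold interpConst; positivity

section equiInterp

variable {m : ℕ} {a h t : ℝ}

theorem eval_equiInterp_equiNode {i : ℕ} (hm : 0 < m) (hi : i ≤ m) (hh : 0 < h) (g : ℝ → ℝ) :
    (equiInterp a h m g).eval (equiNode a h m i) = g (equiNode a h m i) :=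
  eval_interpolate_at_node _ (equiNode_injOn hh hm) (Finset.mem_range.mpr (Nat.lt_succ_of_le hi))

theorem eval_equiInterp_left (hm : 0 < m) (hh : 0 < h) (g : ℝ → ℝ) :
    (equiInterp a h m g).eval a = g a := by
  simpa [equiNode] using eval_equiInterp_equiNode hm (Nat.zero_le m) (a := a) hh g

theorem eval_equiInterp_right (hm : 0 < m) (hh : 0 < h) (g : ℝ → ℝ) :
    (equiInterp a h m g).eval (a + h) = g (a + h) := by
  have hnode : equiNode a h m m = a + h := by
    simp only [equiNode]; field_simp
  simpa [hnode] using eval_equiInterp_equiNode hm le_rfl (a := a) hh g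

theorem abs_sub_eval_equiInterp_le (hm : 0 < m) (hh : 0 < h) {ρ : ℝ → ℝ} {E : ℝ}
    (hρ : ∀ u ∈ Icc a (a + h), |ρ u| ≤ E) (ht : t ∈ Icc a (a + h)) :
    |ρ t - (equiInterp a h m ρ).eval t| ≤ (1 + (m + 1) * (m : ℝ) ^ m) * E := by
  have hinterp := abs_eval_interpolate_le (s := Finset.range (m + 1)) (div_pos hh (by positivity))
    (fun i hi => equiNode_mem hh.le (Finset.mem_range.mp hi))
    (fun i _ k _ hik => le_abs_equiNode_sub hh.le hik)
    (fun i hi => hρ _ (equiNode_mem hh.le (Finset.mem_range.mp hi))) ht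
  have hratio : (a + h - a) / (h / m) = m := by field_simp; ring
  rw [Finset.card_range, Nat.add_sub_cancel, hratio] at hinterp
  push_cast at hinterp
  calc |ρ t - (equiInterp a h m ρ).eval t| ≤ |ρ t| + |(equiInterp a h m ρ).eval t| :=
        abs_sub _ _
    _ ≤ E + (m + 1) * (m : ℝ) ^ m * E := add_le_add (hρ t ht) hinterp
    _ = (1 + (m + 1) * (m : ℝ) ^ m) * E := by ring

theorem integral_mul_sub_equiInterp_eq (hm : 0 < m) (hh : 0 < h) {g φ : ℝ → ℝ}
    (hg : ContinuousOn g (Icc a (a + h))) (hφ : ContinuousOn φ (Icc a (a + h))) {p : ℝ[X]}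
    (hp : p.natDegree ≤ m + 1) :
    ∫ t in a..a + h, φ t * (g t - (equiInterp a h m g).eval t) =
      (∫ t in a..a + h, φ t * ((g t - p.eval t) -
        (equiInterp a h m fun u => g u - p.eval u).eval t)) +
      p.coeff (m + 1) *
        ∫ t in a..a + h, φ t * (nodal (Finset.range (m + 1)) (equiNode a h m)).eval t := by
  have hah : a ≤ a + h := by linarith
  have hdecomp := sub_eval_interpolate_eq (v := equiNode a h m) (equiNode_injOn hh hm)
    (by rwa [Finset.card_range]) g
  simp only [Finset.card_range] at hdecomp
  rw [← intervalIntegral.integral_const_mul, ← intervalIntegral.integral_add]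
  · exact intervalIntegral.integral_congr fun t _ => by
      simp only [equiInterp, hdecomp]; ring
  · exact (hφ.mul ((hg.sub (Polynomial.continuousOn _)).sub
      (Polynomial.continuousOn _))).intervalIntegrable_of_Icc hah
  · exact ((hφ.mul (Polynomial.continuousOn _)).intervalIntegrable_of_Icc hah).const_mul _

theorem abs_integral_mul_sub_equiInterp_le (hm : Even m) (hm0 : 0 < m) (hh : 0 < h)
    {g φ : ℝ → ℝ} {M : ℝ} {L : ℝ≥0} (hg : ContDiffOn ℝ (m + 2) g (Icc a (a + h)))
    (hM₁ : ∀ u ∈ Icc a (a + h), |iteratedDerivWithin (m + 1) g (Icc a (a + h)) u| ≤ M)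
    (hM₂ : ∀ u ∈ Icc a (a + h), |iteratedDerivWithin (m + 2) g (Icc a (a + h)) u| ≤ M)
    (hφb : ∀ u ∈ Icc a (a + h), |φ u| ≤ L) (hφ : LipschitzOnWith L φ (Icc a (a + h))) :
    |∫ t in a..a + h, φ t * (g t - (equiInterp a h m g).eval t)| ≤
      interpConst m * L * M * h ^ (m + 3) := by
  have hah : a ≤ a + h := by linarith
  set T := taylorPolynomial g (m + 1) (Icc a (a + h)) a
  set E := M * h ^ (m + 2) / (m + 1).factorial
  have hM0 : 0 ≤ M := (abs_nonneg _).trans (hM₁ a (left_mem_Icc.mpr hah))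
  have hρ : |∫ t in a..a + h, φ t * ((g t - T.eval t) -
      (equiInterp a h m fun u => g u - T.eval u).eval t)| ≤
        L * ((1 + (m + 1) * (m : ℝ) ^ m) * E) * h := by
    refine (abs_integral_le_mul_of_forall_abs_le
      (B := L * ((1 + (m + 1) * (m : ℝ) ^ m) * E)) hah fun t ht => ?_).trans_eq (by ring)
    rw [abs_mul]
    exact mul_le_mul (hφb t ht) (abs_sub_eval_equiInterp_le hm0 hh
      (fun u hu => abs_sub_eval_taylorPolynomial_le hh.le hg hM₂ hu) ht) (abs_nonneg _)
      L.coe_nonneg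
  have hΦ : |∫ t in a..a + h, φ t * (nodal (Finset.range (m + 1)) (equiNode a h m)).eval t| ≤
      L * h * h ^ (m + 1) * h := by
    simpa using abs_integral_mul_le_of_integral_eq_zero hah hφ (Polynomial.continuousOn _)
      (integral_eval_nodal_eq_zero (w := equiNode a h m) hm fun i hi =>
        equiNode_add_equiNode_sub hm0 hi)
      (fun t ht => abs_eval_nodal_le (v := equiNode a h m) (fun i hi =>
        equiNode_mem hh.le (Finset.mem_range.mp hi)) ht)
  have hcoeff : |T.coeff (m + 1)| ≤ M / (m + 1).factorial := by
    rw [coeff_taylorPolynomial_self, abs_div, Nat.abs_cast]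
    exact div_le_div_of_nonneg_right (hM₁ a (left_mem_Icc.mpr hah)) (by positivity)
  rw [integral_mul_sub_equiInterp_eq hm0 hh hg.continuousOn hφ.continuousOn
    natDegree_taylorPolynomial_le]
  calc _ ≤ _ := (abs_add_le _ _).trans_eq (by rw [abs_mul])
    _ ≤ L * ((1 + (m + 1) * (m : ℝ) ^ m) * E) * h +
          M / (m + 1).factorial * (L * h * h ^ (m + 1) * h) := by gcongr
    _ = interpConst m * L * M * h ^ (m + 3) := by simp only [interpConst, E]; ring

end equiInterp

theorem natCast_succ_div (k n : ℕ) : ((k + 1 : ℕ) : ℝ) / n = k / n + 1 / n := by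
  push_cast; ring

section partition

variable {n r k : ℕ}

theorem tau_succ_eq_equiNode (n r k : ℕ) :
    tau n r (k + 1) = equiNode (k / n) (1 / n) (2 * r) := by
  ext i
  simp only [tau, equiNode]
  push_cast
  ring

theorem interpPoly_succ_eq_equiInterp (n r k : ℕ) (g : ℝ → ℝ) :
    interpPoly n r (k + 1) g = equiInterp (k / n) (1 / n) (2 * r) g := by
  rw [interpPoly, tau_succ_eq_equiNode, equiInterp]

theorem Icc_piece_subset_Icc (hk : k < n) : Icc ((k : ℝ) / n) (k / n + 1 / n) ⊆ Icc 0 1 := by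
  have hn : (0 : ℝ) < n := by exact_mod_cast Nat.zero_lt_of_lt hk
  refine Icc_subset_Icc (by positivity) ?_
  rw [← add_div, div_le_one hn]
  exact_mod_cast hk

theorem floor_mul_eq_of_mem_piece (hn : 0 < n) {t : ℝ}
    (ht : t ∈ Ico ((k : ℝ) / n) (k / n + 1 / n)) : ⌊t * n⌋₊ = k := by
  have hn : (0 : ℝ) < n := by exact_mod_cast hn
  rw [Nat.floor_eq_iff (by nlinarith [ht.1, (by positivity : (0 : ℝ) ≤ k / n)])]
  constructor
  · rw [← div_le_iff₀ hn]; exact ht.1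
  · rw [← lt_div_iff₀ hn, add_div]; exact ht.2

theorem Qn_eqOn_piece (hr : 0 < r) (hk : k < n) (g : ℝ → ℝ) :
    EqOn (Qn n r g) (fun t => (equiInterp (k / n) (1 / n) (2 * r) g).eval t)
      (Icc ((k : ℝ) / n) (k / n + 1 / n)) := by
  intro t ht
  dsimp only
  rcases ht.2.lt_or_eq with hlt | rfl
  · rw [Qn, floor_mul_eq_of_mem_piece (Nat.zero_lt_of_lt hk) ⟨ht.1, hlt⟩,
      min_eq_right hk, interpPoly_succ_eq_equiInterp]
  have hn : (0 : ℝ) < n := by exact_mod_cast Nat.zero_lt_of_lt hk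
  have hfloor : ⌊((k : ℝ) / n + 1 / n) * n⌋₊ = k + 1 := by
    rw [← natCast_succ_div, div_mul_cancel₀ _ hn.ne', Nat.floor_natCast]
  rw [Qn, hfloor]
  rcases (Nat.succ_le_of_lt hk).lt_or_eq with hk1 | hk1
  · rw [min_eq_right hk1, interpPoly_succ_eq_equiInterp, ← natCast_succ_div,
      eval_equiInterp_left (by omega) (by positivity), natCast_succ_div,
      eval_equiInterp_right (by omega) (by positivity)]
  · rw [show min n (k + 1 + 1) = k + 1 by omega, interpPoly_succ_eq_equiInterp]

end partition

theorem iteratedDerivWithin_eq_of_subset {𝕜 F : Type*} [NontriviallyNormedField 𝕜]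
    [NormedAddCommGroup F] [NormedSpace 𝕜 F] {f : 𝕜 → F} {s t : Set 𝕜} {N : ℕ} {x : 𝕜}
    (hst : s ⊆ t) (hs : UniqueDiffOn 𝕜 s) (ht : UniqueDiffOn 𝕜 t) (hf : ContDiffOn 𝕜 N f t)
    (hx : x ∈ s) : iteratedDerivWithin N f s x = iteratedDerivWithin N f t x := by
  simp only [iteratedDerivWithin_eq_iteratedFDerivWithin,
    iteratedFDerivWithin_subset hst hs ht hf hx]

section superconvergence

variable {n r k : ℕ} {g φ : ℝ → ℝ}

theorem sum_integral_pieces (hn : 0 < n) {F : ℝ → ℝ}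
    (hF : ∀ k < n, IntervalIntegrable F volume ((k : ℝ) / n) (k / n + 1 / n)) :
    ∑ k ∈ Finset.range n, ∫ t in (k : ℝ) / n..k / n + 1 / n, F t = ∫ t in (0 : ℝ)..1, F t := by
  have := intervalIntegral.sum_integral_adjacent_intervals (a := fun k : ℕ => (k : ℝ) / n)
    fun k hk => natCast_succ_div k n ▸ hF k hk
  simpa only [natCast_succ_div, Nat.cast_zero, zero_div,
    div_self (Nat.cast_ne_zero.mpr hn.ne' : (n : ℝ) ≠ 0)] using this

theorem intervalIntegrable_of_pieces (hn : 0 < n) {F : ℝ → ℝ}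
    (hF : ∀ k < n, IntervalIntegrable F volume ((k : ℝ) / n) (k / n + 1 / n)) :
    IntervalIntegrable F volume 0 1 := by
  have := IntervalIntegrable.trans_iterate (a := fun k : ℕ => (k : ℝ) / n)
    fun k hk => natCast_succ_div k n ▸ hF k hk
  simpa only [Nat.cast_zero, zero_div, div_self (Nat.cast_ne_zero.mpr hn.ne' : (n : ℝ) ≠ 0)]
    using this

theorem continuousOn_sub_Qn_piece (hr : 0 < r) (hk : k < n) (hg : ContinuousOn g (Icc 0 1)) :
    ContinuousOn (fun t => g t - Qn n r g t) (Icc ((k : ℝ) / n) (k / n + 1 / n)) :=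
  ((hg.mono (Icc_piece_subset_Icc hk)).sub
    (equiInterp ((k : ℝ) / n) (1 / n) (2 * r) g).continuousOn).congr
      fun t ht => by simp only [Pi.sub_apply, Qn_eqOn_piece hr hk g ht]

theorem intervalIntegrable_sub_Qn (hn : 0 < n) (hr : 0 < r) (hg : ContinuousOn g (Icc 0 1)) :
    IntervalIntegrable (fun t => g t - Qn n r g t) volume 0 1 :=
  intervalIntegrable_of_pieces hn fun k hk =>
    (continuousOn_sub_Qn_piece hr hk hg).intervalIntegrable_of_Icc
      (le_add_of_nonneg_right (by positivity))

theorem abs_integral_mul_sub_Qn_piece_le (hr : 0 < r) (hk : k < n) {M : ℝ} {L : ℝ≥0}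
    (hg : ContDiffOn ℝ (2 * r + 2) g (Icc 0 1))
    (hM₁ : ∀ u ∈ Icc (0 : ℝ) 1, |iteratedDerivWithin (2 * r + 1) g (Icc 0 1) u| ≤ M)
    (hM₂ : ∀ u ∈ Icc (0 : ℝ) 1, |iteratedDerivWithin (2 * r + 2) g (Icc 0 1) u| ≤ M)
    (hφb : ∀ u ∈ Icc (0 : ℝ) 1, |φ u| ≤ L) (hφ : LipschitzOnWith L φ (Icc 0 1)) :
    |∫ t in (k : ℝ) / n..k / n + 1 / n, φ t * (g t - Qn n r g t)| ≤
      interpConst (2 * r) * L * M * (1 / n) ^ (2 * r + 3) := by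
  have hn : (0 : ℝ) < n := by exact_mod_cast Nat.zero_lt_of_lt hk
  set P := Icc ((k : ℝ) / n) (k / n + 1 / n)
  have hP : P ⊆ Icc 0 1 := Icc_piece_subset_Icc hk
  have hPlt : (k : ℝ) / n < k / n + 1 / n := lt_add_of_pos_right _ (by positivity)
  have hderiv : ∀ j ≤ 2 * r + 2, ∀ u ∈ P,
      iteratedDerivWithin j g P u = iteratedDerivWithin j g (Icc 0 1) u := fun j hj u hu =>
    iteratedDerivWithin_eq_of_subset hP (uniqueDiffOn_Icc hPlt) (uniqueDiffOn_Icc one_pos)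
      (hg.of_le (by exact_mod_cast hj)) hu
  rw [intervalIntegral.integral_congr
    (g := fun t => φ t * (g t - (equiInterp ((k : ℝ) / n) (1 / n) (2 * r) g).eval t))
    fun t ht => by simp only [Qn_eqOn_piece hr hk g (uIcc_of_le hPlt.le ▸ ht)]]
  exact abs_integral_mul_sub_equiInterp_le (even_two_mul r) (by omega) (by positivity)
    (by exact_mod_cast hg.mono hP)
    (fun u hu => hderiv (2 * r + 1) (by omega) u hu ▸ hM₁ u (hP hu))
    (fun u hu => hderiv (2 * r + 2) le_rfl u hu ▸ hM₂ u (hP hu))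
    (fun u hu => hφb u (hP hu)) (hφ.mono hP)

theorem abs_integral_mul_sub_Qn_le (hn : 0 < n) (hr : 0 < r) {M : ℝ} {L : ℝ≥0}
    (hg : ContDiffOn ℝ (2 * r + 2) g (Icc 0 1))
    (hM₁ : ∀ u ∈ Icc (0 : ℝ) 1, |iteratedDerivWithin (2 * r + 1) g (Icc 0 1) u| ≤ M)
    (hM₂ : ∀ u ∈ Icc (0 : ℝ) 1, |iteratedDerivWithin (2 * r + 2) g (Icc 0 1) u| ≤ M)
    (hφb : ∀ u ∈ Icc (0 : ℝ) 1, |φ u| ≤ L) (hφ : LipschitzOnWith L φ (Icc 0 1)) :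
    |∫ t in (0 : ℝ)..1, φ t * (g t - Qn n r g t)| ≤
      interpConst (2 * r) * L * M * (1 / n) ^ (2 * r + 2) := by
  have hn' : (0 : ℝ) < n := by exact_mod_cast hn
  rw [← sum_integral_pieces (F := fun t => φ t * (g t - Qn n r g t)) hn fun k hk =>
    ((hφ.continuousOn.mono (Icc_piece_subset_Icc hk)).mul
      (continuousOn_sub_Qn_piece hr hk hg.continuousOn)).intervalIntegrable_of_Icc
        (le_add_of_nonneg_right (by positivity))]
  calc _ ≤ ∑ k ∈ Finset.range n,
          |∫ t in (k : ℝ) / n..k / n + 1 / n, φ t * (g t - Qn n r g t)| :=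
        Finset.abs_sum_le_sum_abs _ _
    _ ≤ ∑ _k ∈ Finset.range n, interpConst (2 * r) * L * M * (1 / n) ^ (2 * r + 3) :=
        Finset.sum_le_sum fun k hk =>
          abs_integral_mul_sub_Qn_piece_le hr (Finset.mem_range.mp hk) hg hM₁ hM₂ hφb hφ
    _ = interpConst (2 * r) * L * M * (1 / n) ^ (2 * r + 2) := by
        rw [Finset.sum_const, Finset.card_range, nsmul_eq_mul, pow_succ]
        field_simp

end superconvergence

section parametric

theorem abs_sub_sub_mul_le_of_hasDerivWithinAt {f f' : ℝ → ℝ} {S : Set ℝ} (hS : Convex ℝ S)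
    (hf : ∀ u ∈ S, HasDerivWithinAt f (f' u) S u) {s y ε : ℝ} (hs : s ∈ S) (hy : y ∈ S)
    (hε : ∀ u ∈ S, |f' u - f' s| ≤ ε) :
    |f y - f s - (y - s) * f' s| ≤ ε * |y - s| := by
  have hderiv : ∀ u ∈ S, HasDerivWithinAt (fun u => f u - u * f' s) (f' u - f' s) S u :=
    fun u hu => by simpa using (hf u hu).fun_sub ((hasDerivWithinAt_id u S).mul_const (f' s))
  have := hS.norm_image_sub_le_of_norm_hasDerivWithin_le hderiv hε hs hy
  simp only [Real.norm_eq_abs] at this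
  convert this using 2
  ring

theorem lipschitzOnWith_of_hasDerivWithinAt_of_abs_le {f f' : ℝ → ℝ} {S : Set ℝ} {L : ℝ≥0}
    (hS : Convex ℝ S) (hf : ∀ u ∈ S, HasDerivWithinAt f (f' u) S u) (hb : ∀ u ∈ S, |f' u| ≤ L) :
    LipschitzOnWith L f S :=
  hS.lipschitzOnWith_of_nnnorm_hasDerivWithin_le hf fun u hu => by
    rw [← NNReal.coe_le_coe, coe_nnnorm]; exact hb u hu

variable {G G' : ℝ → ℝ → ℝ} {a b c d : ℝ}

theorem exists_pos_forall_abs_sub_sub_mul_le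
    (hG : ∀ t ∈ Icc c d, ∀ u ∈ Icc a b, HasDerivWithinAt (G · t) (G' u t) (Icc a b) u)
    (hG' : ContinuousOn (Function.uncurry G') (Icc a b ×ˢ Icc c d)) {ε : ℝ} (hε : 0 < ε) :
    ∃ δ > 0, ∀ s ∈ Icc a b, ∀ y ∈ Icc a b, |y - s| < δ → ∀ t ∈ Icc c d,
      |G y t - G s t - (y - s) * G' s t| ≤ ε * |y - s| := by
  obtain ⟨δ, hδ, hclose⟩ := Metric.uniformContinuousOn_iff.mp
    ((isCompact_Icc.prod isCompact_Icc).uniformContinuousOn_of_continuous hG') ε hε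
  refine ⟨δ, hδ, fun s hs y hy hys t ht => ?_⟩
  have hsub : uIcc s y ⊆ Icc a b := uIcc_subset_Icc hs hy
  refine abs_sub_sub_mul_le_of_hasDerivWithinAt (convex_uIcc s y)
    (fun u hu => (hG t ht u (hsub hu)).mono hsub) left_mem_uIcc right_mem_uIcc fun u hu => ?_
  have hus : dist (u, t) (s, t) < δ := by
    rw [Prod.dist_eq, dist_self, Real.dist_eq]
    exact max_lt ((abs_sub_left_of_mem_uIcc hu).trans_lt hys) hδ
  exact (hclose (u, t) ⟨hsub hu, ht⟩ (s, t) ⟨hs, ht⟩ hus).le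

theorem hasDerivWithinAt_integral_mul (hcd : c ≤ d)
    (hG : ∀ t ∈ Icc c d, ∀ u ∈ Icc a b, HasDerivWithinAt (G · t) (G' u t) (Icc a b) u)
    (hGc : ∀ u ∈ Icc a b, ContinuousOn (G u) (Icc c d))
    (hG' : ContinuousOn (Function.uncurry G') (Icc a b ×ˢ Icc c d)) {e : ℝ → ℝ}
    (he : IntervalIntegrable e volume c d) {s : ℝ} (hs : s ∈ Icc a b) :
    HasDerivWithinAt (fun u => ∫ t in c..d, G u t * e t) (∫ t in c..d, G' s t * e t)
      (Icc a b) s := by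
  have hslice : ∀ u ∈ Icc a b, ContinuousOn (G' u) (Icc c d) := fun u hu =>
    hG'.comp (Continuous.prodMk_right u).continuousOn fun t ht => ⟨hu, ht⟩
  have hint : ∀ {F : ℝ → ℝ}, ContinuousOn F (Icc c d) →
      IntervalIntegrable (fun t => F t * e t) volume c d := fun hF =>
    he.continuousOn_mul (uIcc_of_le hcd ▸ hF)
  rw [hasDerivWithinAt_iff_isLittleO, Asymptotics.isLittleO_iff]
  intro ε hε
  set A := ∫ t in c..d, |e t|
  have hA : 0 ≤ A := intervalIntegral.integral_nonneg hcd fun t _ => abs_nonneg _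
  obtain ⟨δ, hδ, hremainder⟩ := exists_pos_forall_abs_sub_sub_mul_le hG hG'
    (div_pos hε (by positivity : 0 < A + 1))
  filter_upwards [self_mem_nhdsWithin, mem_nhdsWithin_of_mem_nhds (Metric.ball_mem_nhds s hδ)]
    with y hy hyδ
  have hys : |y - s| < δ := by rwa [Metric.mem_ball, Real.dist_eq] at hyδ
  have hdiff : (∫ t in c..d, G y t * e t) - (∫ t in c..d, G s t * e t) -
        (y - s) • ∫ t in c..d, G' s t * e t =
      ∫ t in c..d, (G y t - G s t - (y - s) * G' s t) * e t := by
    rw [smul_eq_mul, ← intervalIntegral.integral_const_mul,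
      ← intervalIntegral.integral_sub (hint (hGc y hy)) (hint (hGc s hs)),
      ← intervalIntegral.integral_sub ((hint (hGc y hy)).sub (hint (hGc s hs)))
        ((hint (hslice s hs)).const_mul _)]
    exact intervalIntegral.integral_congr fun t _ => by ring
  rw [hdiff, Real.norm_eq_abs, Real.norm_eq_abs]
  calc _ ≤ ε / (A + 1) * |y - s| * A :=
        abs_integral_mul_le_mul_integral_abs hcd he (hremainder s hs y hy hys)
    _ = ε * |y - s| * (A / (A + 1)) := by ring
    _ ≤ ε * |y - s| := mul_le_of_le_one_right (by positivity)
        ((div_le_one (by positivity)).mpr (by linarith))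

end parametric

section derivativeTower

variable {𝕜 F : Type*} [NontriviallyNormedField 𝕜] [NormedAddCommGroup F] [NormedSpace 𝕜 F]
  {Y : ℕ → 𝕜 → F} {S : Set 𝕜} {N : ℕ}

theorem eqOn_iteratedDerivWithin_of_hasDerivWithinAt (hS : UniqueDiffOn 𝕜 S)
    (hY : ∀ k < N, ∀ s ∈ S, HasDerivWithinAt (Y k) (Y (k + 1) s) S s) :
    ∀ k ≤ N, EqOn (iteratedDerivWithin k (Y 0) S) (Y k) S := by
  intro k
  induction k with
  | zero => exact fun _ s _ => by simp
  | succ k ih =>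
    intro hk s hs
    rw [iteratedDerivWithin_succ, derivWithin_congr (ih (by omega)) (ih (by omega) hs)]
    exact (hY k hk s hs).derivWithin (hS s hs)

theorem contDiffOn_of_hasDerivWithinAt (hS : UniqueDiffOn 𝕜 S)
    (hY : ∀ k ≤ N, ∀ s ∈ S, HasDerivWithinAt (Y k) (Y (k + 1) s) S s) :
    ContDiffOn 𝕜 N (Y 0) S :=
  contDiffOn_of_differentiableOn_deriv fun m hm => by
    have hmN : m ≤ N := by exact_mod_cast hm
    exact DifferentiableOn.congr (fun s hs => (hY m hmN s hs).differentiableWithinAt)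
      (eqOn_iteratedDerivWithin_of_hasDerivWithinAt hS (fun k hk => hY k hk.le) m hmN)

end derivativeTower

section supNorm

theorem abs_le_supNorm {f : ℝ → ℝ} (hf : ContinuousOn f (Icc 0 1)) {u : ℝ}
    (hu : u ∈ Icc (0 : ℝ) 1) : |f u| ≤ supNorm f := by
  have hbdd : BddAbove (range fun t : Icc (0 : ℝ) 1 => |f t|) := by
    rw [← image_eq_range (fun t => |f t|)]
    exact (isCompact_Icc.image_of_continuousOn hf.abs).bddAbove
  exact le_ciSup hbdd ⟨u, hu⟩

theorem supNorm_le {f : ℝ → ℝ} {C : ℝ} (hf : ∀ u ∈ Icc (0 : ℝ) 1, |f u| ≤ C) :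
    supNorm f ≤ C :=
  haveI : Nonempty (Icc (0 : ℝ) 1) := ⟨⟨0, left_mem_Icc.mpr zero_le_one⟩⟩
  ciSup_le fun t => hf t t.2

theorem abs_iteratedDerivWithin_le_cknorm {x : ℝ → ℝ} {k m : ℕ}
    (hx : ContDiffOn ℝ k x (Icc 0 1)) (hm : m ≤ k) :
    ∀ u ∈ Icc (0 : ℝ) 1, |iteratedDerivWithin m x (Icc 0 1) u| ≤ cknorm k x := fun u hu =>
  (abs_le_supNorm (hx.continuousOn_iteratedDerivWithin (by exact_mod_cast hm)
    (uniqueDiffOn_Icc one_pos)) hu).trans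
      (le_ciSup (f := fun i : Fin (k + 1) => supNorm (iteratedDerivWithin i x (Icc 0 1)))
        (finite_range _).bddAbove ⟨m, Nat.lt_succ_of_le hm⟩)

end supNorm

/-- Proposition 3: with `y := K(x − Q_n x)`, `‖K(y − Q_n y)‖_∞ ≤ C ‖x‖_{2r+2,∞} h^{4r+4}` with `C` independent of `n`. -/
theorem stmt_13 (r : ℕ) (hr : 1 ≤ r)
    (κ : ℝ → ℝ → ℝ) (κd : ℕ → ℕ → ℝ → ℝ → ℝ) (C₂ : ℝ) (hC₂ : 0 < C₂)
    (hκ0 : κd 0 0 = κ)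
    (hds : ∀ α β : ℕ, α + β + 1 ≤ 2 * r + 3 → ∀ t ∈ Set.Icc (0:ℝ) 1, ∀ s ∈ Set.Icc (0:ℝ) 1,
      HasDerivWithinAt (fun u => κd α β u t) (κd (α + 1) β s t) (Set.Icc 0 1) s)
    (hdt : ∀ α β : ℕ, α + β + 1 ≤ 2 * r + 3 → ∀ s ∈ Set.Icc (0:ℝ) 1, ∀ t ∈ Set.Icc (0:ℝ) 1,
      HasDerivWithinAt (fun u => κd α β s u) (κd α (β + 1) s t) (Set.Icc 0 1) t)
    (hcont : ∀ α β : ℕ, α + β ≤ 2 * r + 3 →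
      ContinuousOn (fun q : ℝ × ℝ => κd α β q.1 q.2) (Set.Icc 0 1 ×ˢ Set.Icc 0 1))
    (hbd : ∀ α β : ℕ, α + β ≤ 2 * r + 3 →
      ∀ s ∈ Set.Icc (0:ℝ) 1, ∀ t ∈ Set.Icc (0:ℝ) 1, |κd α β s t| ≤ C₂)
    :
    ∃ C : ℝ, 0 < C ∧
      ∀ n : ℕ, 1 ≤ n → ∀ x : ℝ → ℝ, ContDiffOn ℝ (2 * r + 2) x (Set.Icc 0 1) →
        supNorm (Kop κ (fun t =>
            Kop κ (fun u => x u - Qn n r x u) t -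
              Qn n r (Kop κ (fun u => x u - Qn n r x u)) t)) ≤
          C * cknorm (2 * r + 2) x * ((1 : ℝ) / n) ^ (4 * r + 4) := by
  subst hκ0
  refine ⟨(interpConst (2 * r) * C₂) ^ 2, by have := interpConst_pos (2 * r); positivity, ?_⟩
  intro n hn x hx
  set L : ℝ≥0 := ⟨C₂, hC₂.le⟩
  set B := interpConst (2 * r) * C₂ * cknorm (2 * r + 2) x * (1 / n) ^ (2 * r + 2)
  have hslice : ∀ k ≤ 2 * r + 2, ∀ s ∈ Icc (0 : ℝ) 1, LipschitzOnWith L (κd k 0 s) (Icc 0 1) :=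
    fun k hk s hs => lipschitzOnWith_of_hasDerivWithinAt_of_abs_le (convex_Icc 0 1)
      (hdt k 0 (by omega) s hs) (hbd k 1 (by omega) s hs)
  set y : ℕ → ℝ → ℝ := fun k => Kop (κd k 0) fun t => x t - Qn n r x t
  have hy : ∀ k ≤ 2 * r + 2, ∀ s ∈ Icc (0 : ℝ) 1,
      HasDerivWithinAt (y k) (y (k + 1) s) (Icc 0 1) s := fun k hk s hs =>
    hasDerivWithinAt_integral_mul zero_le_one (hds k 0 (by omega))
      (fun u hu => (hslice k hk u hu).continuousOn) (hcont (k + 1) 0 (by omega))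
      (intervalIntegrable_sub_Qn hn hr hx.continuousOn) hs
  have hyB : ∀ k ≤ 2 * r + 2, ∀ s ∈ Icc (0 : ℝ) 1,
      |iteratedDerivWithin k (y 0) (Icc 0 1) s| ≤ B := fun k hk s hs => by
    rw [eqOn_iteratedDerivWithin_of_hasDerivWithinAt (uniqueDiffOn_Icc one_pos)
      (fun j hj => hy j hj.le) k hk hs]
    exact abs_integral_mul_sub_Qn_le hn hr hx
      (abs_iteratedDerivWithin_le_cknorm (by exact_mod_cast hx) (by omega))
      (abs_iteratedDerivWithin_le_cknorm (by exact_mod_cast hx) le_rfl)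
      (hbd k 0 (by omega) s hs) (hslice k hk s hs)
  refine supNorm_le fun s hs => ?_
  calc _ ≤ interpConst (2 * r) * C₂ * B * (1 / n) ^ (2 * r + 2) :=
      abs_integral_mul_sub_Qn_le hn hr
        (by exact_mod_cast contDiffOn_of_hasDerivWithinAt (uniqueDiffOn_Icc one_pos) hy)
        (hyB _ (by omega)) (hyB _ le_rfl) (hbd 0 0 (by omega) s hs) (hslice 0 (by omega) s hs)
    _ = (interpConst (2 * r) * C₂) ^ 2 * cknorm (2 * r + 2) x * (1 / n) ^ (4 * r + 4) := by ring
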